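/- arXiv:1203.6306 — 2 statements merged into one kernel-verified Lean document; each statement's English description precedes it below -/
import Mathlib

section
/- Let $(\Omega, \mu)$ be a measure space and let $0 < \sigma_\circ \le \sigma^\circ$ be real numbers. Let $w_n, w : \Omega \to \mathbb{R}$ be measurable with $\sigma_\circ \le w_n(x) \le \sigma^\circ$ and $\sigma_\circ \le w(x) \le \sigma^\circ$ for $\mu$-a.e. $x$, and let $F_n, F : \Omega \to \mathbb{R}^3$ be measurable with finite $L^2(\mu;\mathbb{R}^3)$ norm. Assume: (i) $\|w_n F - w F\|_{L^2(\mu;\mathbb{R}^3)} \to 0$; (ii) $F_n \rightharpoonup F$ weakly in $L^2$, i.e. $\int_\Omega F_n \cdot G \, d\mu \to \int_\Omega F \cdot G \, d\mu$ for every measurable $G : \Omega \to \mathbb{R}^3$ with finite $L^2$ norm; (iii) $\limsup_n \int_\Omega w_n |F_n|^2 \, d\mu \le \int_\Omega w |F|^2 \, d\mu$. Then $\|F_n - F\|_{L^2(\mu;\mathbb{R}^3)} \to 0$. -/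
open MeasureTheory Filter Topology RealInnerProductSpace

/-!
Expanding the weighted square gives
`σ₀ ‖Fₙ - F‖² ≤ ∫ wₙ |Fₙ - F|² = ∫ wₙ |Fₙ|² - 2 ⟪Fₙ, wₙ F⟫ + ⟪F, wₙ F⟫`.
A weakly convergent sequence is bounded (Banach–Steinhaus), so together with `wₙ F → w F`
both inner products tend to `∫ w |F|²`, and by the `limsup` hypothesis the right-hand side
has nonpositive `limsup`.
-/

section WeakConvergence

variable {E : Type*} [NormedAddCommGroup E] [InnerProductSpace ℝ E] [CompleteSpace E]
  {x : ℕ → E} {x₀ : E}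

theorem exists_norm_le_of_tendsto_inner
    (hx : ∀ y, Tendsto (fun n => ⟪x n, y⟫) atTop (𝓝 ⟪x₀, y⟫)) : ∃ C, ∀ n, ‖x n‖ ≤ C := by
  obtain ⟨C, hC⟩ := banach_steinhaus (g := fun n => innerSL ℝ (x n)) fun y => by
    obtain ⟨M, hM⟩ := (hx y).norm.bddAbove_range
    exact ⟨M, fun n => hM ⟨n, rfl⟩⟩
  exact ⟨C, fun n => by simpa [innerSL_apply_norm] using hC n⟩

theorem tendsto_inner_of_weak_of_tendsto {y : ℕ → E} {y₀ : E}
    (hx : ∀ z, Tendsto (fun n => ⟪x n, z⟫) atTop (𝓝 ⟪x₀, z⟫)) (hy : Tendsto y atTop (𝓝 y₀)) :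
    Tendsto (fun n => ⟪x n, y n⟫) atTop (𝓝 ⟪x₀, y₀⟫) := by
  obtain ⟨C, hC⟩ := exists_norm_le_of_tendsto_inner hx
  have hsmall : Tendsto (fun n => ⟪x n, y n - y₀⟫) atTop (𝓝 0) :=
    (tendsto_sub_nhds_zero_iff.mpr hy).op_zero_isBoundedUnder_le (isBoundedUnder_of ⟨C, hC⟩)
      (fun v u => ⟪u, v⟫) fun v u => by rw [mul_comm]; exact norm_inner_le_norm u v
  simpa [inner_sub_right] using (hx y₀).add hsmall

theorem tendsto_of_weak_of_energy_le {u : ℕ → E} {u₀ : E} {a : ℕ → ℝ} {σ : ℝ} (hσ : 0 < σ)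
    (hx : ∀ z, Tendsto (fun n => ⟪x n, z⟫) atTop (𝓝 ⟪x₀, z⟫)) (hu : Tendsto u atTop (𝓝 u₀))
    (ha : IsBoundedUnder (· ≤ ·) atTop a) (ha_limsup : limsup a atTop ≤ ⟪x₀, u₀⟫)
    (henergy : ∀ n, σ * ‖x n - x₀‖ ^ 2 ≤ a n - 2 * ⟪x n, u n⟫ + ⟪x₀, u n⟫) :
    Tendsto x atTop (𝓝 x₀) := by
  rw [Metric.tendsto_nhds]
  intro ε hε
  set L := ⟪x₀, u₀⟫
  have hδ : 0 < σ * ε ^ 2 / 4 := by positivity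
  have h_a : ∀ᶠ n in atTop, a n < L + σ * ε ^ 2 / 4 :=
    eventually_lt_of_limsup_lt (by linarith) ha
  have h_cross : ∀ᶠ n in atTop, L - σ * ε ^ 2 / 4 < ⟪x n, u n⟫ :=
    (tendsto_inner_of_weak_of_tendsto hx hu).eventually (eventually_gt_nhds (by linarith))
  have h_fixed : ∀ᶠ n in atTop, ⟪x₀, u n⟫ < L + σ * ε ^ 2 / 4 :=
    ((tendsto_const_nhds (x := x₀)).inner hu).eventually (eventually_lt_nhds (by linarith))
  filter_upwards [h_a, h_cross, h_fixed] with n h₁ h₂ h₃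
  have : σ * ‖x n - x₀‖ ^ 2 < σ * ε ^ 2 := by linarith [henergy n]
  rw [dist_eq_norm]
  exact lt_of_pow_lt_pow_left₀ 2 hε.le (lt_of_mul_lt_mul_left this hσ.le)

end WeakConvergence

namespace MeasureTheory

variable {Ω E : Type*} [MeasurableSpace Ω] {μ : Measure Ω}
  [NormedAddCommGroup E] [InnerProductSpace ℝ E] {f g : Ω → E}

theorem MemLp.integrable_inner (hf : MemLp f 2 μ) (hg : MemLp g 2 μ) :
    Integrable (fun x => ⟪f x, g x⟫) μ := by
  refine (L2.integrable_inner (𝕜 := ℝ) (hf.toLp f) (hg.toLp g)).congr ?_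
  filter_upwards [hf.coeFn_toLp, hg.coeFn_toLp] with x hfx hgx
  rw [hfx, hgx]

theorem MemLp.inner_toLp_toLp (hf : MemLp f 2 μ) (hg : MemLp g 2 μ) :
    ⟪hf.toLp f, hg.toLp g⟫ = ∫ x, ⟪f x, g x⟫ ∂μ := by
  refine integral_congr_ae ?_
  filter_upwards [hf.coeFn_toLp, hg.coeFn_toLp] with x hfx hgx
  rw [hfx, hgx]

theorem MemLp.norm_toLp_sq (hf : MemLp f 2 μ) : ‖hf.toLp f‖ ^ 2 = ∫ x, ‖f x‖ ^ 2 ∂μ := by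
  simp only [← real_inner_self_eq_norm_sq, hf.inner_toLp_toLp hf]

theorem tendsto_inner_toLp_of_tendsto_integral_inner [MeasurableSpace E] [BorelSpace E]
    {F : ℕ → Ω → E} (hF : ∀ n, MemLp (F n) 2 μ) (hf : MemLp f 2 μ)
    (h : ∀ G : Ω → E, Measurable G → MemLp G 2 μ →
      Tendsto (fun n => ∫ x, ⟪F n x, G x⟫ ∂μ) atTop (𝓝 (∫ x, ⟪f x, G x⟫ ∂μ)))
    (φ : Lp E 2 μ) : Tendsto (fun n => ⟪(hF n).toLp (F n), φ⟫) atTop (𝓝 ⟪hf.toLp f, φ⟫) := by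
  set G := (Lp.aestronglyMeasurable φ).mk φ
  have hφG : (φ : Ω → E) =ᵐ[μ] G := (Lp.aestronglyMeasurable φ).ae_eq_mk
  have hG : MemLp G 2 μ := (Lp.memLp φ).ae_eq hφG
  have hφ : φ = hG.toLp G := by
    rw [← Lp.toLp_coeFn φ (Lp.memLp φ)]
    exact MemLp.toLp_congr _ _ hφG
  simpa only [hφ, MemLp.inner_toLp_toLp] using
    h G (Lp.aestronglyMeasurable φ).stronglyMeasurable_mk.measurable hG

section Weighted

variable {w : Ω → ℝ}

theorem memLp_top_of_ae_bounds (hw : AEStronglyMeasurable w μ) {a b : ℝ}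
    (hab : ∀ᵐ x ∂μ, a ≤ w x ∧ w x ≤ b) : MemLp w ⊤ μ :=
  memLp_top_of_bound hw (max |a| |b|) <| by
    filter_upwards [hab] with x hx using abs_le_max_abs_abs hx.1 hx.2

theorem MemLp.inner_toLp_smul_toLp (hf : MemLp f 2 μ) (hw : MemLp w ⊤ μ) :
    ⟪hf.toLp f, (hf.smul hw).toLp (w • f)⟫ = ∫ x, w x * ‖f x‖ ^ 2 ∂μ := by
  rw [hf.inner_toLp_toLp]
  congr with x
  simp [real_inner_smul_right]

theorem MemLp.integral_mul_norm_sq_le (hf : MemLp f 2 μ) (hw : MemLp w ⊤ μ) {b : ℝ}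
    (hwb : ∀ᵐ x ∂μ, w x ≤ b) : ∫ x, w x * ‖f x‖ ^ 2 ∂μ ≤ b * ‖hf.toLp f‖ ^ 2 := by
  have hf2 := hf.integrable_norm_pow two_ne_zero
  rw [hf.norm_toLp_sq, ← integral_const_mul]
  refine integral_mono_ae (hf2.mul_of_top_right hw) (hf2.const_mul b) ?_
  filter_upwards [hwb] with x hx
  exact mul_le_mul_of_nonneg_right hx (by positivity)

theorem MemLp.integral_mul_norm_sub_sq (hf : MemLp f 2 μ) (hg : MemLp g 2 μ) (hw : MemLp w ⊤ μ) :
    ∫ x, w x * ‖f x - g x‖ ^ 2 ∂μ = ∫ x, w x * ‖f x‖ ^ 2 ∂μ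
      - 2 * ⟪hf.toLp f, (hg.smul hw).toLp (w • g)⟫ + ⟪hg.toLp g, (hg.smul hw).toLp (w • g)⟫ := by
  have hff := hf.integrable_inner (hf.smul hw)
  have hfg := (hf.integrable_inner (hg.smul hw)).const_mul 2
  have hgg := hg.integrable_inner (hg.smul hw)
  rw [← hf.inner_toLp_smul_toLp hw, MemLp.inner_toLp_toLp, MemLp.inner_toLp_toLp,
    MemLp.inner_toLp_toLp, ← integral_const_mul, ← integral_sub hff hfg,
    ← integral_add (hff.sub' hfg) hgg]
  congr with x
  simp only [Pi.smul_apply', norm_sub_sq_real, real_inner_smul_right, real_inner_self_eq_norm_sq]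
  ring

theorem MemLp.mul_norm_toLp_sub_sq_le (hf : MemLp f 2 μ) (hg : MemLp g 2 μ) (hw : MemLp w ⊤ μ)
    {σ : ℝ} (hσ : ∀ᵐ x ∂μ, σ ≤ w x) :
    σ * ‖hf.toLp f - hg.toLp g‖ ^ 2 ≤ ∫ x, w x * ‖f x‖ ^ 2 ∂μ
      - 2 * ⟪hf.toLp f, (hg.smul hw).toLp (w • g)⟫ + ⟪hg.toLp g, (hg.smul hw).toLp (w • g)⟫ := by
  have hfg := hf.sub hg
  have hfg2 := hfg.integrable_norm_pow two_ne_zero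
  rw [← hf.integral_mul_norm_sub_sq hg hw, ← hf.toLp_sub hg, hfg.norm_toLp_sq,
    ← integral_const_mul]
  refine integral_mono_ae (hfg2.const_mul σ) (hfg2.mul_of_top_right hw) ?_
  filter_upwards [hσ] with x hx
  exact mul_le_mul_of_nonneg_right hx (by positivity)

end Weighted

end MeasureTheory

theorem weighted_energy_implies_strong_L2_general {Ω : Type*} [MeasurableSpace Ω] (μ : Measure Ω)
    (σ₀ σmax : ℝ) (hσ₀ : 0 < σ₀) (hσ : σ₀ ≤ σmax)
    (wn : ℕ → Ω → ℝ) (w : Ω → ℝ)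
    (hwn : ∀ n, Measurable (wn n)) (hw : Measurable w)
    (hwnbd : ∀ n, ∀ᵐ x ∂μ, σ₀ ≤ wn n x ∧ wn n x ≤ σmax)
    (hwbd : ∀ᵐ x ∂μ, σ₀ ≤ w x ∧ w x ≤ σmax)
    (Fn : ℕ → Ω → EuclideanSpace ℝ (Fin 3)) (F : Ω → EuclideanSpace ℝ (Fin 3))
    (hFnL2 : ∀ n, MemLp (Fn n) 2 μ) (hFL2 : MemLp F 2 μ)
    (hi : Tendsto
      (fun n => eLpNorm (fun x => wn n x • F x - w x • F x) 2 μ) atTop (𝓝 0))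
    (hii : ∀ G : Ω → EuclideanSpace ℝ (Fin 3), Measurable G → MemLp G 2 μ →
      Tendsto (fun n => ∫ x, ⟪Fn n x, G x⟫ ∂μ) atTop (𝓝 (∫ x, ⟪F x, G x⟫ ∂μ)))
    (hiii : Filter.limsup (fun n => ∫ x, wn n x * ‖Fn n x‖ ^ 2 ∂μ) atTop
      ≤ ∫ x, w x * ‖F x‖ ^ 2 ∂μ) :
    Tendsto (fun n => eLpNorm (Fn n - F) 2 μ) atTop (𝓝 0) := by
  have hwn_top n := memLp_top_of_ae_bounds (hwn n).aestronglyMeasurable (hwnbd n)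
  have hw_top := memLp_top_of_ae_bounds hw.aestronglyMeasurable hwbd
  have hweak := tendsto_inner_toLp_of_tendsto_integral_inner hFnL2 hFL2 hii
  obtain ⟨C, hC⟩ := exists_norm_le_of_tendsto_inner hweak
  have hwF : Tendsto (fun n => (hFL2.smul (hwn_top n)).toLp (wn n • F)) atTop
      (𝓝 ((hFL2.smul hw_top).toLp (w • F))) :=
    (Lp.tendsto_Lp_iff_tendsto_eLpNorm'' _ _ _ _).2 hi
  have henergy_bdd : IsBoundedUnder (· ≤ ·) atTop fun n => ∫ x, wn n x * ‖Fn n x‖ ^ 2 ∂μ :=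
    isBoundedUnder_of ⟨σmax * C ^ 2, fun n =>
      ((hFnL2 n).integral_mul_norm_sq_le (hwn_top n) ((hwnbd n).mono fun _ hx => hx.2)).trans
        (by gcongr; exacts [hσ₀.le.trans hσ, hC n])⟩
  rw [← Lp.tendsto_Lp_iff_tendsto_eLpNorm'' _ hFnL2 _ hFL2]
  refine tendsto_of_weak_of_energy_le hσ₀ hweak hwF henergy_bdd ?_ fun n =>
    (hFnL2 n).mul_norm_toLp_sub_sq_le hFL2 (hwn_top n) ((hwnbd n).mono fun _ hx => hx.1)
  rwa [hFL2.inner_toLp_smul_toLp hw_top]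

/-- if the weights `wₙ, w` are bounded between `σ₀ > 0` and `σmax` a.e.,
`wₙ F → w F` strongly in `L²`, `Fₙ ⇀ F` weakly in `L²`, and
`limsup ∫ wₙ |Fₙ|² ≤ ∫ w |F|²`, then `Fₙ → F` strongly in `L²(μ; ℝ³)`. -/
theorem weighted_energy_implies_strong_L2 {Ω : Type*} [MeasurableSpace Ω] (μ : Measure Ω)
    (σ₀ σmax : ℝ) (hσ₀ : 0 < σ₀) (hσ : σ₀ ≤ σmax)
    (wn : ℕ → Ω → ℝ) (w : Ω → ℝ)
    (hwn : ∀ n, Measurable (wn n)) (hw : Measurable w)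
    (hwnbd : ∀ n, ∀ᵐ x ∂μ, σ₀ ≤ wn n x ∧ wn n x ≤ σmax)
    (hwbd : ∀ᵐ x ∂μ, σ₀ ≤ w x ∧ w x ≤ σmax)
    (Fn : ℕ → Ω → EuclideanSpace ℝ (Fin 3)) (F : Ω → EuclideanSpace ℝ (Fin 3))
    (hFn : ∀ n, Measurable (Fn n)) (hF : Measurable F)
    (hFnL2 : ∀ n, MemLp (Fn n) 2 μ) (hFL2 : MemLp F 2 μ)
    (hi : Tendsto
      (fun n => eLpNorm (fun x => wn n x • F x - w x • F x) 2 μ) atTop (𝓝 0))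
    (hii : ∀ G : Ω → EuclideanSpace ℝ (Fin 3), Measurable G → MemLp G 2 μ →
      Tendsto (fun n => ∫ x, ⟪Fn n x, G x⟫ ∂μ) atTop (𝓝 (∫ x, ⟪F x, G x⟫ ∂μ)))
    (hiii : Filter.limsup (fun n => ∫ x, wn n x * ‖Fn n x‖ ^ 2 ∂μ) atTop
      ≤ ∫ x, w x * ‖F x‖ ^ 2 ∂μ) :
    Tendsto (fun n => eLpNorm (Fn n - F) 2 μ) atTop (𝓝 0) :=
  weighted_energy_implies_strong_L2_general μ σ₀ σmax hσ₀ hσ wn w hwn hw hwnbd hwbd Fn F hFnL2 hFL2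
    hi hii hiii
end

section
/- Let $X$ be a real Hilbert space and let $(X_n)_{n \in \mathbb{N}}$ be an increasing sequence of closed subspaces of $X$ whose union is dense in $X$. Let $A : X \to X^*$ be a map into the continuous dual of $X$, and let $b \in X^*$. Assume: (i) there exists $r > 0$ such that for every $n$ there is $x_n \in X_n$ with $\|x_n\| \le r$ and $\langle A x_n, y \rangle = \langle b, y \rangle$ for all $y \in X_n$; (ii) $\sup_n \|A x_n\|_{X^*} < \infty$; (iii) whenever a subsequence $(x_{n(k)})_k$ converges weakly to some $y \in X$, $A x_{n(k)} \to b$ in the weak-* sense (i.e. $\langle A x_{n(k)}, z \rangle \to \langle b, z \rangle$ for every $z \in X$), and $\langle A x_{n(k)}, x_{n(k)} \rangle \to \langle b, y \rangle$, then $x_{n(k)} \to y$ strongly in $X$; (iv) whenever $y_k \to y$ strongly in $X$ then $\langle A y_k, z \rangle \to \langle A y, z \rangle$ for every $z \in X$. Then there exist $x \in X$ with $\|x\| \le r$ and a subsequence $(x_{n(k)})_k$ with $x_{n(k)} \to x$ strongly in $X$ and $A x = b$. -/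
/-!
Bounded sequences in a Hilbert space have weakly convergent subsequences (sequential
Banach–Alaoglu on the closed span of the sequence, which is separable). Along such a
subsequence `x_{φ k} ⇀ y`, the Galerkin equations force `A x_{φ k} z = b z` eventually for `z`
in the dense union of the `X_n`, and the uniform bound on `‖A x_n‖` extends this convergence
to all `z`. Testing the Galerkin equation with `x_{φ k}` itself gives
`A x_{φ k} x_{φ k} = b x_{φ k} → b y`, so condition (S) yields strong convergence, and
demicontinuity identifies `A y` with the weak-* limit `b`.
-/

open Filter Topology RealInnerProductSpace
open scoped InnerProductSpace

theorem ContinuousLinearMap.tendsto_apply_of_dense {ι 𝕜 E F : Type*} [NontriviallyNormedField 𝕜]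
    [NormedAddCommGroup E] [NormedSpace 𝕜 E] [NormedAddCommGroup F] [NormedSpace 𝕜 F]
    {l : Filter ι} {f : ι → E →L[𝕜] F} {g : E →L[𝕜] F} (hf : ∃ C, ∀ i, ‖f i‖ ≤ C)
    {s : Set E} (hs : Dense s) (h : ∀ z ∈ s, Tendsto (fun i => f i z) l (𝓝 (g z))) (z : E) :
    Tendsto (fun i => f i z) l (𝓝 (g z)) := by
  have hequi : Equicontinuous ((↑) ∘ f : ι → E → F) :=
    ((NormedSpace.equicontinuous_TFAE f).out 5 1).mp hf
  have hclosed := hequi.isClosed_setOfPred_tendsto (l := l) g.continuous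
  exact closure_minimal h hclosed (hs z)

section Hilbert

variable {𝕜 E : Type*} [RCLike 𝕜] [NormedAddCommGroup E] [InnerProductSpace 𝕜 E] [CompleteSpace E]

theorem exists_subseq_tendsto_inner_of_separableSpace [TopologicalSpace.SeparableSpace E]
    {u : ℕ → E} {r : ℝ} (hu : ∀ n, ‖u n‖ ≤ r) :
    ∃ y : E, ∃ φ : ℕ → ℕ, StrictMono φ ∧
      ∀ z, Tendsto (fun k => ⟪u (φ k), z⟫_𝕜) atTop (𝓝 ⟪y, z⟫_𝕜) := by
  have hball : ∀ n, StrongDual.toWeakDual (InnerProductSpace.toDual 𝕜 E (u n)) ∈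
      WeakDual.toStrongDual ⁻¹' Metric.closedBall (0 : StrongDual 𝕜 E) r := fun n => by
    simpa using hu n
  obtain ⟨a, -, φ, hφ, ha⟩ := WeakDual.isSeqCompact_closedBall 𝕜 E 0 r hball
  refine ⟨(InnerProductSpace.toDual 𝕜 E).symm (WeakDual.toStrongDual a), φ, hφ, fun z => ?_⟩
  rw [InnerProductSpace.toDual_symm_apply]
  exact ((WeakDual.eval_continuous z).tendsto a).comp ha

theorem exists_subseq_tendsto_inner {u : ℕ → E} {r : ℝ} (hu : ∀ n, ‖u n‖ ≤ r) :
    ∃ y : E, ∃ φ : ℕ → ℕ, StrictMono φ ∧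
      ∀ z, Tendsto (fun k => ⟪u (φ k), z⟫_𝕜) atTop (𝓝 ⟪y, z⟫_𝕜) := by
  set M := (Submodule.span 𝕜 (Set.range u)).topologicalClosure
  have hM : TopologicalSpace.IsSeparable (M : Set E) := by
    rw [Submodule.topologicalClosure_coe]
    exact (Set.countable_range u).isSeparable.span.closure
  have := hM.separableSpace
  have : CompleteSpace M := (Submodule.isClosed_topologicalClosure _).completeSpace_coe
  have huM : ∀ n, u n ∈ M :=
    fun n => Submodule.le_topologicalClosure _ (Submodule.subset_span ⟨n, rfl⟩)
  obtain ⟨y, φ, hφ, hy⟩ :=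
    exists_subseq_tendsto_inner_of_separableSpace (𝕜 := 𝕜) (u := fun n => (⟨u n, huM n⟩ : M)) hu
  refine ⟨y, φ, hφ, fun z => ?_⟩
  simpa only [Submodule.inner_orthogonalProjectionOnto_eq_of_mem_left] using
    hy (M.orthogonalProjectionOnto z)

theorem tendsto_apply_of_tendsto_inner {ι : Type*} {l : Filter ι} {u : ι → E} {y : E}
    (hu : ∀ z, Tendsto (fun k => ⟪u k, z⟫_𝕜) l (𝓝 ⟪y, z⟫_𝕜)) (f : StrongDual 𝕜 E) :
    Tendsto (fun k => f (u k)) l (𝓝 (f y)) := by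
  -- Riesz: `f v = ⟪f', v⟫_𝕜` is the conjugate of `⟪v, f'⟫_𝕜`.
  have := (RCLike.continuous_conj.tendsto _).comp (hu ((InnerProductSpace.toDual 𝕜 E).symm f))
  simpa [Function.comp_def] using this

end Hilbert

theorem ContinuousLinearMap.tendsto_apply_of_eqOn_of_dense_iUnion {𝕜 E F : Type*}
    [NontriviallyNormedField 𝕜] [NormedAddCommGroup E] [NormedSpace 𝕜 E]
    [NormedAddCommGroup F] [NormedSpace 𝕜 F] {V : ℕ → Submodule 𝕜 E} (hV : Monotone V)
    (hdense : Dense (⋃ n, (V n : Set E))) {f : ℕ → E →L[𝕜] F} {g : E →L[𝕜] F}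
    (hf : ∃ C, ∀ n, ‖f n‖ ≤ C) (hfg : ∀ n, ∀ y ∈ V n, f n y = g y) (z : E) :
    Tendsto (fun n => f n z) atTop (𝓝 (g z)) := by
  refine tendsto_apply_of_dense hf hdense (fun y hy => ?_) z
  obtain ⟨m, hym⟩ := Set.mem_iUnion.mp hy
  refine tendsto_const_nhds.congr' ?_
  filter_upwards [eventually_ge_atTop m] with n hn
  exact (hfg n y (hV hn hym)).symm

theorem galerkin_subsequence_converges_to_solution_general
    {X : Type*} [NormedAddCommGroup X] [InnerProductSpace ℝ X] [CompleteSpace X]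
    (Xn : ℕ → Submodule ℝ X) (hmono : Monotone Xn)
    (hdense : Dense (⋃ n, (Xn n : Set X)))
    (A : X → X →L[ℝ] ℝ) (b : X →L[ℝ] ℝ)
    (r : ℝ) (xn : ℕ → X)
    (hmem : ∀ n, xn n ∈ Xn n) (hbd : ∀ n, ‖xn n‖ ≤ r)
    (hgal : ∀ n, ∀ y ∈ Xn n, A (xn n) y = b y)
    (hAbd : ∃ C : ℝ, ∀ n, ‖A (xn n)‖ ≤ C)
    (hS : ∀ φ : ℕ → ℕ, StrictMono φ → ∀ y : X,
      (∀ z : X, Tendsto (fun k => ⟪xn (φ k), z⟫) atTop (𝓝 ⟪y, z⟫)) →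
      (∀ z : X, Tendsto (fun k => A (xn (φ k)) z) atTop (𝓝 (b z))) →
      Tendsto (fun k => A (xn (φ k)) (xn (φ k))) atTop (𝓝 (b y)) →
      Tendsto (fun k => ‖xn (φ k) - y‖) atTop (𝓝 0))
    (hdemi : ∀ (yk : ℕ → X) (y : X),
      Tendsto (fun k => ‖yk k - y‖) atTop (𝓝 0) →
      ∀ z : X, Tendsto (fun k => A (yk k) z) atTop (𝓝 (A y z))) :
    ∃ x : X, ‖x‖ ≤ r ∧
      (∃ φ : ℕ → ℕ, StrictMono φ ∧
        Tendsto (fun k => ‖xn (φ k) - x‖) atTop (𝓝 0)) ∧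
      A x = b := by
  obtain ⟨y, φ, hφ, hweak⟩ := exists_subseq_tendsto_inner (𝕜 := ℝ) hbd
  have hweakstar : ∀ z, Tendsto (fun k => A (xn (φ k)) z) atTop (𝓝 (b z)) := fun z =>
    (ContinuousLinearMap.tendsto_apply_of_eqOn_of_dense_iUnion hmono hdense hAbd hgal z).comp
      hφ.tendsto_atTop
  have henergy : Tendsto (fun k => A (xn (φ k)) (xn (φ k))) atTop (𝓝 (b y)) := by
    simpa only [hgal _ _ (hmem _)] using tendsto_apply_of_tendsto_inner hweak b
  have hstrong := hS φ hφ y hweak hweakstar henergy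
  have hconv : Tendsto (xn ∘ φ) atTop (𝓝 y) := tendsto_iff_norm_sub_tendsto_zero.mpr hstrong
  refine ⟨y, le_of_tendsto' hconv.norm fun k => hbd _, ⟨φ, hφ, hstrong⟩, ?_⟩
  ext z
  exact tendsto_nhds_unique (hdemi _ y hstrong z) (hweakstar z)

/-- abstract convergence theorem for Galerkin approximations: bounded
Galerkin solutions of `A x = b` on an increasing, densely exhausting family of closed
subspaces of a Hilbert space, for an operator with a condition-(S)-type property and
demicontinuity, have a strongly convergent subsequence whose limit solves `A x = b`. -/
theorem galerkin_subsequence_converges_to_solution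
    {X : Type*} [NormedAddCommGroup X] [InnerProductSpace ℝ X] [CompleteSpace X]
    (Xn : ℕ → Submodule ℝ X) (hmono : Monotone Xn)
    (hclosed : ∀ n, IsClosed (Xn n : Set X))
    (hdense : Dense (⋃ n, (Xn n : Set X)))
    (A : X → X →L[ℝ] ℝ) (b : X →L[ℝ] ℝ)
    (r : ℝ) (hr : 0 < r) (xn : ℕ → X)
    (hmem : ∀ n, xn n ∈ Xn n) (hbd : ∀ n, ‖xn n‖ ≤ r)
    (hgal : ∀ n, ∀ y ∈ Xn n, A (xn n) y = b y)
    (hAbd : ∃ C : ℝ, ∀ n, ‖A (xn n)‖ ≤ C)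
    (hS : ∀ φ : ℕ → ℕ, StrictMono φ → ∀ y : X,
      (∀ z : X, Tendsto (fun k => ⟪xn (φ k), z⟫) atTop (𝓝 ⟪y, z⟫)) →
      (∀ z : X, Tendsto (fun k => A (xn (φ k)) z) atTop (𝓝 (b z))) →
      Tendsto (fun k => A (xn (φ k)) (xn (φ k))) atTop (𝓝 (b y)) →
      Tendsto (fun k => ‖xn (φ k) - y‖) atTop (𝓝 0))
    (hdemi : ∀ (yk : ℕ → X) (y : X),
      Tendsto (fun k => ‖yk k - y‖) atTop (𝓝 0) →
      ∀ z : X, Tendsto (fun k => A (yk k) z) atTop (𝓝 (A y z))) :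
    ∃ x : X, ‖x‖ ≤ r ∧
      (∃ φ : ℕ → ℕ, StrictMono φ ∧
        Tendsto (fun k => ‖xn (φ k) - x‖) atTop (𝓝 0)) ∧
      A x = b :=
  galerkin_subsequence_converges_to_solution_general Xn hmono hdense A b r xn hmem hbd hgal hAbd hS
    hdemi
end
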